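/- arXiv:2108.11214 — 3 statements merged into one kernel-verified Lean document; each statement's English description precedes it below -/
import Mathlib

section
/- Let σ ⊆ ℝ^n be a polyhedral cone whose polar cone is σ∨ = Cone(u_1,…,u_r). Then the map ι : N_ℝ(σ) → (ℝ ∪ {−∞})^r defined by ι(φ) = (φ(u_1),…,φ(u_r)) is injective, continuous, its image is a closed subset of (ℝ ∪ {−∞})^r, and ι is a homeomorphism onto its image. -/
open Topology

noncomputable section

/-- The standard pairing `⟨u, v⟩ = ∑ i, u i * v i` on `ℝⁿ`. -/
def dotp {n : ℕ} (u v : Fin n → ℝ) : ℝ := ∑ i, u i * v i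

/-- The polyhedral cone generated by the vectors `v 0, …, v (s-1)`. -/
def coneOf {n s : ℕ} (v : Fin s → (Fin n → ℝ)) : Set (Fin n → ℝ) :=
  {x | ∃ lam : Fin s → ℝ, (∀ j, 0 ≤ lam j) ∧ x = ∑ j, lam j • v j}

/-- A set is a polyhedral cone if it is finitely generated. -/
def IsPolyCone {n : ℕ} (σ : Set (Fin n → ℝ)) : Prop :=
  ∃ (s : ℕ) (v : Fin s → (Fin n → ℝ)), σ = coneOf v

/-- The polar cone `σ∨ = {u | ⟨u,v⟩ ≤ 0 ∀ v ∈ σ}`. -/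
def polarCone {n : ℕ} (σ : Set (Fin n → ℝ)) : Set (Fin n → ℝ) :=
  {u | ∀ v ∈ σ, dotp u v ≤ 0}

/-- A cone is pointed if it contains no nonzero linear subspace. -/
def IsPointed {n : ℕ} (σ : Set (Fin n → ℝ)) : Prop :=
  ∀ W : Submodule ℝ (Fin n → ℝ), (W : Set (Fin n → ℝ)) ⊆ σ → W = ⊥

/-- The partial compactification `N_ℝ(σ)`: the set of `ℝ₊`-equivariant monoid morphisms
`φ : σ∨ → ℝ ∪ {-∞}`, realized as `EReal`-valued functions on `σ∨` never taking the
value `+∞`.  (In `EReal` one has `(0 : EReal) * ⊥ = 0`, which is the convention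
`0 · (-∞) = 0`.)  It is topologized as a subspace of the product
`σ∨ → EReal`, i.e. with the topology of pointwise convergence. -/
def NRc {n : ℕ} (σ : Set (Fin n → ℝ)) : Set (↥(polarCone σ) → EReal) :=
  {φ | (∀ u, φ u ≠ ⊤) ∧
    (∀ (u u' : ↥(polarCone σ)) (h : (u : Fin n → ℝ) + (u' : Fin n → ℝ) ∈ polarCone σ),
      φ ⟨(u : Fin n → ℝ) + (u' : Fin n → ℝ), h⟩ = φ u + φ u') ∧
    (∀ (c : ℝ), 0 ≤ c → ∀ (u : ↥(polarCone σ)) (h : c • (u : Fin n → ℝ) ∈ polarCone σ),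
      φ ⟨c • (u : Fin n → ℝ), h⟩ = (c : EReal) * φ u)}

/-- The canonical map `N_ℝ → (σ∨ → EReal)`, `v ↦ (u ↦ ⟨u,v⟩)`; its image lies in `N_ℝ(σ)`. -/
def jmap {n : ℕ} (σ : Set (Fin n → ℝ)) (v : Fin n → ℝ) : ↥(polarCone σ) → EReal :=
  fun u => ((dotp (u : Fin n → ℝ) v : ℝ) : EReal)


/-- `ℝ ∪ {-∞}`, realized as the subspace of `EReal` of points different from `+∞`. -/
def RInf : Type := {x : EReal // x ≠ ⊤}

instance : TopologicalSpace RInf := instTopologicalSpaceSubtype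

/-- The map `ι : N_ℝ(σ) → (ℝ ∪ {-∞})^r`, `φ ↦ (φ(u_1), …, φ(u_r))`, for generators
`u_1, …, u_r` of `σ∨`. -/
def iotaGen {n r : ℕ} (σ : Set (Fin n → ℝ)) (u : Fin r → (Fin n → ℝ))
    (hu : ∀ i, u i ∈ polarCone σ) (φ : ↥(NRc σ)) : Fin r → RInf :=
  fun i => ⟨φ.1 ⟨u i, hu i⟩, φ.2.1 ⟨u i, hu i⟩⟩


/-! The generators `u_i` span `σ∨` as a cone, so a morphism `φ ∈ N_ℝ(σ)` is determined by its
values `y_i = φ(u_i)`: writing `w = ∑ a_i u_i` with `a_i ≥ 0` gives `φ(w) = ∑ a_i y_i`. A tuple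
`y` arises in this way exactly when `∑ a_i y_i = ∑ b_i y_i` whenever `∑ a_i u_i = ∑ b_i u_i`;
each such relation is a closed condition because `y ↦ ∑ a_i y_i` is continuous on
`(ℝ ∪ {-∞})^r` for `a ≥ 0` (no `∞ - ∞` can occur). The inverse of `ι` on its image is
`y ↦ (w ↦ ∑ a_i(w) y_i)` for a fixed choice of coefficients `a(w)`, which is continuous. -/

namespace EReal

lemma coe_mul_ne_top {c : ℝ} (hc : 0 ≤ c) {x : EReal} (hx : x ≠ ⊤) : (c : EReal) * x ≠ ⊤ :=
  (mul_ne_top _ _).2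
    ⟨.inl (coe_ne_bot c), .inl (EReal.coe_nonneg.2 hc), .inl (coe_ne_top c), .inr hx⟩

lemma coe_mul_finsetSum {ι : Type*} {c : ℝ} (hc : 0 ≤ c) (s : Finset ι) (f : ι → EReal) :
    (c : EReal) * ∑ i ∈ s, f i = ∑ i ∈ s, (c : EReal) * f i :=
  map_sum (AddMonoidHom.mk ⟨((c : EReal) * ·), mul_zero _⟩
    (left_distrib_of_nonneg_of_ne_top (EReal.coe_nonneg.2 hc) (coe_ne_top c))) f s

lemma continuous_coe_mul (c : ℝ) : Continuous fun x : EReal => (c : EReal) * x := by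
  rcases eq_or_ne c 0 with rfl | hc
  · simpa using continuous_const
  · have hc' : (c : EReal) ≠ 0 := coe_ne_zero.2 hc
    refine continuous_iff_continuousAt.2 fun x => ?_
    exact (continuousAt_mul (.inl hc') (.inl hc') (.inl (coe_ne_bot c)) (.inl (coe_ne_top c))).comp
      (continuous_const.prodMk continuous_id).continuousAt

lemma continuous_add_of_ne_top {X : Type*} [TopologicalSpace X] {f g : X → EReal}
    (hf : Continuous f) (hg : Continuous g) (hf' : ∀ x, f x ≠ ⊤) (hg' : ∀ x, g x ≠ ⊤) :
    Continuous (f + g) :=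
  continuous_iff_continuousAt.2 fun x =>
    (continuousAt_add (.inl (hf' x)) (.inr (hg' x))).comp (hf.prodMk hg).continuousAt

lemma continuous_finsetSum_of_ne_top {X ι : Type*} [TopologicalSpace X] (s : Finset ι)
    {f : ι → X → EReal} (hf : ∀ i ∈ s, Continuous (f i)) (hf' : ∀ i ∈ s, ∀ x, f i x ≠ ⊤) :
    Continuous (∑ i ∈ s, f i) :=
  (Finset.sum_induction f (fun g => Continuous g ∧ ∀ x, g x ≠ ⊤)
    (fun _ _ hg hh => ⟨continuous_add_of_ne_top hg.1 hh.1 hg.2 hh.2,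
      fun x => add_ne_top (hg.2 x) (hh.2 x)⟩)
    ⟨continuous_const, fun _ => zero_ne_top⟩ fun i hi => ⟨hf i hi, hf' i hi⟩).1

end EReal

section PositiveCombination

variable {ι : Type*} [Fintype ι]

def posComb (a : ι → ℝ) (y : ι → RInf) : EReal := ∑ i, (a i : EReal) * (y i).1

variable {a b : ι → ℝ}

lemma posComb_ne_top (ha : 0 ≤ a) (y : ι → RInf) : posComb a y ≠ ⊤ :=
  Finset.sum_induction _ (· ≠ ⊤) (fun _ _ => EReal.add_ne_top) EReal.zero_ne_top
    fun i _ => EReal.coe_mul_ne_top (ha i) (y i).2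

lemma continuous_posComb (ha : 0 ≤ a) : Continuous (posComb a) := by
  have h := EReal.continuous_finsetSum_of_ne_top Finset.univ
    (f := fun i (y : ι → RInf) => (a i : EReal) * (y i).1)
    (fun i _ => (EReal.continuous_coe_mul (a i)).comp
      (continuous_subtype_val.comp (continuous_apply i)))
    (fun i _ y => EReal.coe_mul_ne_top (ha i) (y i).2)
  rwa [Finset.sum_fn] at h

lemma posComb_add (ha : 0 ≤ a) (hb : 0 ≤ b) (y : ι → RInf) :
    posComb (a + b) y = posComb a y + posComb b y := by
  simp only [posComb, Pi.add_apply, EReal.coe_add, ← Finset.sum_add_distrib,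
    EReal.right_distrib_of_nonneg (EReal.coe_nonneg.2 (ha _)) (EReal.coe_nonneg.2 (hb _))]

lemma posComb_smul {c : ℝ} (hc : 0 ≤ c) (a : ι → ℝ) (y : ι → RInf) :
    posComb (c • a) y = c * posComb a y := by
  simp only [posComb, Pi.smul_apply, smul_eq_mul, EReal.coe_mul, mul_assoc,
    EReal.coe_mul_finsetSum hc]

lemma posComb_single [DecidableEq ι] (i : ι) (y : ι → RInf) :
    posComb (Pi.single i 1) y = (y i).1 := by
  simp [posComb, Pi.single_apply, apply_ite (fun t : ℝ => (t : EReal)), ite_mul]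

def compatibleTuples {n : ℕ} (u : ι → Fin n → ℝ) : Set (ι → RInf) :=
  {y | ∀ a b : ι → ℝ, 0 ≤ a → 0 ≤ b → ∑ i, a i • u i = ∑ i, b i • u i →
    posComb a y = posComb b y}

lemma isClosed_compatibleTuples {n : ℕ} (u : ι → Fin n → ℝ) :
    IsClosed (compatibleTuples u) := by
  simp only [compatibleTuples, Set.ofPred_forall]
  exact isClosed_iInter fun a => isClosed_iInter fun b => isClosed_iInter fun ha =>
    isClosed_iInter fun hb => isClosed_iInter fun _ =>
      isClosed_eq (continuous_posComb ha) (continuous_posComb hb)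

end PositiveCombination

section PolarCone

variable {n : ℕ}

def polarPointedCone (σ : Set (Fin n → ℝ)) : PointedCone ℝ (Fin n → ℝ) where
  carrier := polarCone σ
  zero_mem' _ _ := by simp [dotp]
  add_mem' ha hb v hv := by
    simpa [dotp, add_mul, Finset.sum_add_distrib] using add_nonpos (ha v hv) (hb v hv)
  smul_mem' c a ha v hv := by
    simpa [dotp, ← Nonneg.coe_smul, mul_assoc, ← Finset.mul_sum] using
      mul_nonpos_of_nonneg_of_nonpos c.2 (ha v hv)

lemma sum_smul_mem_polarCone {σ : Set (Fin n → ℝ)} {ι : Type*} (s : Finset ι) {a : ι → ℝ}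
    (ha : 0 ≤ a) {v : ι → Fin n → ℝ} (hv : ∀ i, v i ∈ polarCone σ) :
    ∑ i ∈ s, a i • v i ∈ polarCone σ :=
  (polarPointedCone σ).sum_mem fun i _ => (polarPointedCone σ).smul_mem (ha i) (hv i)

end PolarCone

namespace NRc

variable {n : ℕ} {σ : Set (Fin n → ℝ)} {φ : ↥(polarCone σ) → EReal}

lemma apply_zero (hφ : φ ∈ NRc σ) (h : (0 : Fin n → ℝ) ∈ polarCone σ) : φ ⟨0, h⟩ = 0 := by
  have := hφ.2.2 0 le_rfl ⟨0, h⟩ (by rwa [zero_smul])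
  simpa only [zero_smul, EReal.coe_zero, zero_mul] using this

lemma apply_sum_smul (hφ : φ ∈ NRc σ) {ι : Type*} (s : Finset ι) {a : ι → ℝ} (ha : 0 ≤ a)
    {v : ι → Fin n → ℝ} (hv : ∀ i, v i ∈ polarCone σ) (h : ∑ i ∈ s, a i • v i ∈ polarCone σ) :
    φ ⟨∑ i ∈ s, a i • v i, h⟩ = ∑ i ∈ s, (a i : EReal) * φ ⟨v i, hv i⟩ := by
  classical
  induction s using Finset.induction_on with
  | empty => simpa only [Finset.sum_empty] using apply_zero hφ (by simpa using h)
  | insert i s hi ih =>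
    have hs := sum_smul_mem_polarCone s ha hv
    have hi' := sum_smul_mem_polarCone {i} ha hv
    simp only [Finset.sum_singleton] at hi'
    simp only [Finset.sum_insert hi]
    rw [hφ.2.1 ⟨_, hi'⟩ ⟨_, hs⟩, hφ.2.2 _ (ha i) ⟨v i, hv i⟩, ih hs]

end NRc

section Generators

variable {n r : ℕ} {σ : Set (Fin n → ℝ)} {u : Fin r → Fin n → ℝ}

lemma NRc.apply_sum_smul_gens {φ : ↥(NRc σ)} (hu : ∀ i, u i ∈ polarCone σ) {a : Fin r → ℝ}
    (ha : 0 ≤ a) (h : ∑ i, a i • u i ∈ polarCone σ) :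
    φ.1 ⟨∑ i, a i • u i, h⟩ = posComb a (iotaGen σ u hu φ) :=
  NRc.apply_sum_smul φ.2 Finset.univ ha hu h

lemma iotaGen_mem_compatibleTuples (hu : ∀ i, u i ∈ polarCone σ) (φ : ↥(NRc σ)) :
    iotaGen σ u hu φ ∈ compatibleTuples u := by
  intro a b ha hb hab
  have h := sum_smul_mem_polarCone Finset.univ ha hu
  rw [← NRc.apply_sum_smul_gens hu ha h, ← NRc.apply_sum_smul_gens hu hb (hab ▸ h)]
  exact congrArg φ.1 (Subtype.ext hab)

lemma continuous_iotaGen (hu : ∀ i, u i ∈ polarCone σ) : Continuous (iotaGen σ u hu) :=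
  continuous_pi fun _ =>
    ((continuous_apply _).comp continuous_subtype_val).subtype_mk _

section Coefficients

variable (hgen : polarCone σ ⊆ coneOf u)

def genCoeffs (w : ↥(polarCone σ)) : Fin r → ℝ := (hgen w.2).choose

lemma genCoeffs_nonneg (w : ↥(polarCone σ)) : 0 ≤ genCoeffs hgen w :=
  (hgen w.2).choose_spec.1

lemma sum_genCoeffs_smul (w : ↥(polarCone σ)) : ∑ i, genCoeffs hgen w i • u i = w :=
  (hgen w.2).choose_spec.2.symm

def extendFromGens (y : Fin r → RInf) : ↥(polarCone σ) → EReal :=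
  fun w => posComb (genCoeffs hgen w) y

lemma continuous_extendFromGens : Continuous (extendFromGens hgen) :=
  continuous_pi fun w => continuous_posComb (genCoeffs_nonneg hgen w)

lemma extendFromGens_iotaGen (hu : ∀ i, u i ∈ polarCone σ) (φ : ↥(NRc σ)) :
    extendFromGens hgen (iotaGen σ u hu φ) = φ.1 := by
  funext w
  have h : ∑ i, genCoeffs hgen w i • u i ∈ polarCone σ := (sum_genCoeffs_smul hgen w).symm ▸ w.2
  rw [extendFromGens, ← NRc.apply_sum_smul_gens hu (genCoeffs_nonneg hgen w) h]
  exact congrArg φ.1 (Subtype.ext (sum_genCoeffs_smul hgen w))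

lemma extendFromGens_mem_NRc {y : Fin r → RInf} (hy : y ∈ compatibleTuples u) :
    extendFromGens hgen y ∈ NRc σ := by
  refine ⟨fun w => posComb_ne_top (genCoeffs_nonneg hgen w) y, fun w w' hww' => ?_,
    fun c hc w hcw => ?_⟩
  -- `a(w + w')` and `a(w) + a(w')` are two expressions of `w + w'`; likewise for `c • w`.
  · have hrel := hy (genCoeffs hgen ⟨_, hww'⟩) (genCoeffs hgen w + genCoeffs hgen w')
      (genCoeffs_nonneg hgen _) (add_nonneg (genCoeffs_nonneg hgen w) (genCoeffs_nonneg hgen w'))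
      (by simp only [sum_genCoeffs_smul, Pi.add_apply, add_smul, Finset.sum_add_distrib])
    rw [extendFromGens, hrel, posComb_add (genCoeffs_nonneg hgen w) (genCoeffs_nonneg hgen w')]
    rfl
  · have hrel := hy (genCoeffs hgen ⟨_, hcw⟩) (c • genCoeffs hgen w)
      (genCoeffs_nonneg hgen _) (smul_nonneg hc (genCoeffs_nonneg hgen w))
      (by simp only [sum_genCoeffs_smul, Pi.smul_apply, smul_eq_mul, mul_smul, ← Finset.smul_sum])
    rw [extendFromGens, hrel, posComb_smul hc]
    rfl

lemma iotaGen_extendFromGens (hu : ∀ i, u i ∈ polarCone σ) {y : Fin r → RInf}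
    (hy : y ∈ compatibleTuples u) : iotaGen σ u hu ⟨_, extendFromGens_mem_NRc hgen hy⟩ = y := by
  classical
  funext i
  apply Subtype.ext
  have hrel := hy (genCoeffs hgen ⟨u i, hu i⟩) (Pi.single i 1)
    (genCoeffs_nonneg hgen _) (Pi.single_nonneg.2 zero_le_one)
    (by simp only [sum_genCoeffs_smul, Pi.single_apply, ite_smul, one_smul, zero_smul,
      Finset.sum_ite_eq', Finset.mem_univ, if_true])
  exact hrel.trans (posComb_single i y)

end Coefficients

lemma range_iotaGen (hgen : polarCone σ ⊆ coneOf u) (hu : ∀ i, u i ∈ polarCone σ) :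
    Set.range (iotaGen σ u hu) = compatibleTuples u :=
  Set.Subset.antisymm (Set.range_subset_iff.2 (iotaGen_mem_compatibleTuples hu))
    fun _ hy => ⟨_, iotaGen_extendFromGens hgen hu hy⟩

lemma isEmbedding_iotaGen (hgen : polarCone σ ⊆ coneOf u) (hu : ∀ i, u i ∈ polarCone σ) :
    IsEmbedding (iotaGen σ u hu) := by
  have hinv : extendFromGens hgen ∘ iotaGen σ u hu = Subtype.val :=
    funext (extendFromGens_iotaGen hgen hu)
  have hinducing : IsInducing (iotaGen σ u hu) :=
    .of_comp (continuous_iotaGen hu) (continuous_extendFromGens hgen)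
      (hinv ▸ IsInducing.subtypeVal)
  refine ⟨hinducing, fun φ ψ h => Subtype.ext ?_⟩
  rw [← extendFromGens_iotaGen hgen hu φ, ← extendFromGens_iotaGen hgen hu ψ, h]

end Generators

theorem stmt0_general {n r : ℕ} (σ : Set (Fin n → ℝ))
    (u : Fin r → (Fin n → ℝ)) (hpol : polarCone σ = coneOf u)
    (hu : ∀ i, u i ∈ polarCone σ) :
    Function.Injective (iotaGen σ u hu) ∧ Continuous (iotaGen σ u hu) ∧
      IsClosed (Set.range (iotaGen σ u hu)) ∧ IsEmbedding (iotaGen σ u hu) := by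
  have hemb := isEmbedding_iotaGen hpol.subset hu
  exact ⟨hemb.injective, hemb.continuous,
    range_iotaGen hpol.subset hu ▸ isClosed_compatibleTuples u, hemb⟩

/-- If `σ ⊆ ℝⁿ` is a polyhedral cone with polar cone
`σ∨ = Cone(u_1, …, u_r)`, then `ι : N_ℝ(σ) → (ℝ ∪ {-∞})^r`, `φ ↦ (φ(u_i))_i`, is
injective, continuous, has closed image, and is a homeomorphism onto its image. -/
theorem stmt0 {n r : ℕ} (σ : Set (Fin n → ℝ)) (hσ : IsPolyCone σ)
    (u : Fin r → (Fin n → ℝ)) (hpol : polarCone σ = coneOf u)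
    (hu : ∀ i, u i ∈ polarCone σ) :
    Function.Injective (iotaGen σ u hu) ∧ Continuous (iotaGen σ u hu) ∧
      IsClosed (Set.range (iotaGen σ u hu)) ∧ IsEmbedding (iotaGen σ u hu) :=
  stmt0_general σ u hpol hu

end
end

section
/- Let σ ⊆ ℝ^n be a pointed polyhedral cone. Then the canonical map j : N_ℝ → N_ℝ(σ) sending v to the function u ↦ ⟨u,v⟩ is injective, continuous, and a homeomorphism onto its image (a topological embedding). -/
open Topology

noncomputable section

/-! Pointedness makes `σ \ {0}` convex, so `0` is not in the convex hull of the nonzero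
generators of `σ`. Separating them from `0` gives `u` with `⟨u, vⱼ⟩ < 0` for every nonzero
generator `vⱼ`, an interior point of `σ∨`; hence `σ∨` spans `M_ℝ` and `v ↦ (⟨u, v⟩)_{u ∈ σ∨}`
is an injective linear map out of a finite-dimensional space, i.e. a closed embedding.
Composing with the embedding `ℝ ↪ ℝ ∪ {-∞}` in each coordinate gives `j`. -/

open PointedCone

lemma dotp_eq_dotProduct {n : ℕ} (u v : Fin n → ℝ) : dotp u v = u ⬝ᵥ v := rfl

lemma coneOf_eq_hull {n s : ℕ} (v : Fin s → Fin n → ℝ) :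
    coneOf v = (hull ℝ (Set.range v) : Set (Fin n → ℝ)) := by
  ext x
  simp only [SetLike.mem_coe, Submodule.mem_span_range_iff_exists_fun]
  constructor
  · rintro ⟨lam, hlam, rfl⟩
    exact ⟨fun j => ⟨lam j, hlam j⟩, rfl⟩
  · rintro ⟨c, rfl⟩
    exact ⟨fun j => c j, fun j => (c j).2, rfl⟩

lemma PointedCone.convex_diff_zero {E : Type*} [AddCommGroup E] [Module ℝ E]
    {C : PointedCone ℝ E} (hC : C.lineal = ⊥) : Convex ℝ ((C : Set E) \ {0}) := by
  rw [convex_iff_forall_pos]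
  rintro x ⟨hxC, hx0⟩ y ⟨hyC, -⟩ a b ha hb hab
  refine ⟨C.convex hxC hyC ha.le hb.le hab, fun hzero => hx0 ?_⟩
  have hlin : a • x ∈ C.lineal := by
    refine ⟨C.smul_mem ha.le hxC, ?_⟩
    rw [Set.mem_singleton_iff] at hzero
    show -(a • x) ∈ C
    rw [neg_eq_of_add_eq_zero_right hzero]
    exact C.smul_mem hb.le hyC
  rw [hC, Submodule.mem_bot, smul_eq_zero] at hlin
  exact hlin.resolve_left ha.ne'

lemma exists_dotProduct_neg_of_zero_notMem_convexHull {ι : Type*} [Fintype ι]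
    {S : Set (ι → ℝ)} (hS : S.Finite) (h0 : (0 : ι → ℝ) ∉ convexHull ℝ S) :
    ∃ u : ι → ℝ, ∀ x ∈ S, u ⬝ᵥ x < 0 := by
  classical
  obtain ⟨f, c, hf, hc⟩ := geometric_hahn_banach_closed_point (convex_convexHull ℝ S)
    (hS.isCompact_convexHull ℝ).isClosed h0
  refine ⟨(dotProductEquiv ℝ ι).symm f.toLinearMap, fun x hx => ?_⟩
  have hfx : (dotProductEquiv ℝ ι).symm f.toLinearMap ⬝ᵥ x = f x :=
    LinearMap.congr_fun ((dotProductEquiv ℝ ι).apply_symm_apply f.toLinearMap) x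
  rw [hfx]
  linarith [hf x (subset_convexHull ℝ S hx), map_zero f]

lemma mem_polarCone_coneOf {n s : ℕ} {v : Fin s → Fin n → ℝ} {u : Fin n → ℝ}
    (hu : ∀ j, u ⬝ᵥ v j ≤ 0) : u ∈ polarCone (coneOf v) := by
  rintro _ ⟨lam, hlam, rfl⟩
  rw [dotp_eq_dotProduct, dotProduct_sum]
  exact Finset.sum_nonpos fun j _ => by
    rw [dotProduct_smul, smul_eq_mul]
    exact mul_nonpos_of_nonneg_of_nonpos (hlam j) (hu j)

lemma exists_add_smul_mem_polarCone_coneOf {n s : ℕ} {v : Fin s → Fin n → ℝ}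
    {u : Fin n → ℝ} (hu : ∀ j, v j ≠ 0 → u ⬝ᵥ v j < 0) (w : Fin n → ℝ) :
    ∃ ε > (0 : ℝ), u + ε • w ∈ polarCone (coneOf v) := by
  have hev : ∀ᶠ ε in 𝓝 (0 : ℝ), ∀ j, (u + ε • w) ⬝ᵥ v j ≤ 0 := by
    refine Filter.eventually_all.2 fun j => ?_
    by_cases hj : v j = 0
    · simp [hj]
    have hcont : Continuous fun ε : ℝ => (u + ε • w) ⬝ᵥ v j := by fun_prop
    refine (hcont.tendsto 0).eventually (Iio_mem_nhds ?_) |>.mono fun _ => le_of_lt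
    simpa using hu j hj
  obtain ⟨ε, hε, hεpos⟩ := ((hev.filter_mono nhdsWithin_le_nhds).and
    (self_mem_nhdsWithin : ∀ᶠ ε in 𝓝[>] (0 : ℝ), 0 < ε)).exists
  exact ⟨ε, hεpos, mem_polarCone_coneOf hε⟩

theorem eq_zero_of_forall_mem_polarCone_dotp_eq_zero {n : ℕ} {σ : Set (Fin n → ℝ)}
    (hσ : IsPolyCone σ) (hpt : IsPointed σ) {x : Fin n → ℝ}
    (hx : ∀ u ∈ polarCone σ, dotp u x = 0) : x = 0 := by
  obtain ⟨s, v, rfl⟩ := hσ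
  have hsalient : (hull ℝ (Set.range v)).lineal = ⊥ :=
    hpt _ (by rw [coneOf_eq_hull]; exact (hull ℝ (Set.range v)).lineal_le)
  have h0 : (0 : Fin n → ℝ) ∉ convexHull ℝ (Set.range v \ {0}) := fun h =>
    (convexHull_min (Set.sdiff_subset_sdiff_left subset_hull) (convex_diff_zero hsalient) h).2 rfl
  obtain ⟨u, hu⟩ := exists_dotProduct_neg_of_zero_notMem_convexHull (Set.finite_range v).sdiff h0
  have hu' : ∀ j, v j ≠ 0 → u ⬝ᵥ v j < 0 := fun j hj => hu _ ⟨⟨j, rfl⟩, hj⟩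
  have hupolar : u ∈ polarCone (coneOf v) := mem_polarCone_coneOf fun j => by
    by_cases hj : v j = 0
    · simp [hj]
    · exact (hu' j hj).le
  obtain ⟨ε, hε, hεpolar⟩ := exists_add_smul_mem_polarCone_coneOf hu' x
  have hxx : ε * (x ⬝ᵥ x) = 0 := by
    have := hx _ hεpolar
    rwa [dotp_eq_dotProduct, add_dotProduct, smul_dotProduct, ← dotp_eq_dotProduct,
      hx u hupolar, zero_add, smul_eq_mul] at this
  exact dotProduct_self_eq_zero.1 ((mul_eq_zero.1 hxx).resolve_left hε.ne')

def polarPairing {n : ℕ} (σ : Set (Fin n → ℝ)) : (Fin n → ℝ) →ₗ[ℝ] (polarCone σ → ℝ) :=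
  LinearMap.pi fun u => dotProductEquiv ℝ (Fin n) u

lemma jmap_eq_comp_polarPairing {n : ℕ} (σ : Set (Fin n → ℝ)) :
    jmap σ = Pi.map (fun _ => ((↑) : ℝ → EReal)) ∘ polarPairing σ := rfl

theorem isEmbedding_jmap {n : ℕ} {σ : Set (Fin n → ℝ)} (hσ : IsPolyCone σ)
    (hpt : IsPointed σ) : IsEmbedding (jmap σ) := by
  have hker : LinearMap.ker (polarPairing σ) = ⊥ :=
    LinearMap.ker_eq_bot'.2 fun x hx =>
      eq_zero_of_forall_mem_polarCone_dotp_eq_zero hσ hpt fun u hu => congrFun hx ⟨u, hu⟩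
  rw [jmap_eq_comp_polarPairing]
  exact (IsEmbedding.piMap fun _ => EReal.isEmbedding_coe).comp
    (LinearMap.isClosedEmbedding_of_injective hker).isEmbedding

lemma jmap_mem_NRc {n : ℕ} (σ : Set (Fin n → ℝ)) (v : Fin n → ℝ) : jmap σ v ∈ NRc σ := by
  refine ⟨fun u => EReal.coe_ne_top _, fun _ _ _ => ?_, fun _ _ _ _ => ?_⟩
  · simp only [jmap, dotp_eq_dotProduct, add_dotProduct, EReal.coe_add]
  · simp only [jmap, dotp_eq_dotProduct, smul_dotProduct, smul_eq_mul, EReal.coe_mul]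

/-- If `σ ⊆ ℝⁿ` is a pointed polyhedral cone, then the canonical map
`j : N_ℝ → N_ℝ(σ)`, `v ↦ (u ↦ ⟨u,v⟩)`, takes values in `N_ℝ(σ)` and is injective,
continuous, and a topological embedding (a homeomorphism onto its image).
Since `N_ℝ(σ)` carries the subspace topology of the product `σ∨ → EReal`, being an
embedding into the latter with range inside `N_ℝ(σ)` is equivalent to being an
embedding into `N_ℝ(σ)`. -/
theorem stmt1 {n : ℕ} (σ : Set (Fin n → ℝ)) (hσ : IsPolyCone σ) (hpt : IsPointed σ) :
    (∀ v : Fin n → ℝ, jmap σ v ∈ NRc σ) ∧ Function.Injective (jmap σ) ∧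
      Continuous (jmap σ) ∧ IsEmbedding (jmap σ) :=
  have hemb := isEmbedding_jmap hσ hpt
  ⟨jmap_mem_NRc σ, hemb.injective, hemb.continuous, hemb⟩

end
end

section
/- Let P ⊆ ℝ^n be a nonempty pointed polyhedron and let u ∈ Recc(P)∨, i.e. ⟨u,w⟩ ≤ 0 for all w ∈ Recc(P). Then the set Vert(P) of vertices of P is finite and nonempty, the linear functional v ↦ ⟨u,v⟩ is bounded above on P, and sup_{v ∈ P} ⟨u,v⟩ = max_{v ∈ Vert(P)} ⟨u,v⟩. -/
/-!
A point of `P = {v | ⟨uᵢ, v⟩ ≤ aᵢ}` is a vertex exactly when the kernels of its active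
constraints meet only in `0` (a basic feasible solution in LP terms), so a vertex is determined
by its set of active constraints and there are finitely many. At a non-vertex `x` pick `d ≠ 0`
in that intersection; since `Recc(P)` is pointed and `u ≤ 0` on it, one of `±d` does not
decrease `u` and leaves `Recc(P)`. Moving along it until a new constraint becomes active
strictly enlarges the active set without decreasing `u`, so this ends at a vertex at least as
good as `x`. Hence `u` is bounded on `P` by its maximum over the finitely many vertices.
-/

open Topology

noncomputable section

/-- The set of vertices of `P`: points of `P` that are the unique maximizer on `P` of
some linear functional (zero-dimensional faces). -/
def vertices {n : ℕ} (P : Set (Fin n → ℝ)) : Set (Fin n → ℝ) :=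
  {x | x ∈ P ∧ ∃ c : Fin n → ℝ, ∀ y ∈ P, y ≠ x → dotp c y < dotp c x}

section Polyhedron

variable {E ι : Type*} [AddCommGroup E] [Module ℝ E] (f : ι → Module.Dual ℝ E) (a : ι → ℝ)

def polyhedron : Set E := {x | ∀ i, f i x ≤ a i}

def recessionCone : Set E := {d | ∀ i, f i d ≤ 0}

def activeSet (x : E) : Set ι := {i | f i x = a i}

def activeKer (x : E) : Submodule ℝ E := ⨅ i ∈ activeSet f a x, LinearMap.ker (f i)

def basicFeasible : Set E := {x | x ∈ polyhedron f a ∧ activeKer f a x = ⊥}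

variable {f a}

theorem mem_activeKer {x d : E} :
    d ∈ activeKer f a x ↔ ∀ i ∈ activeSet f a x, f i d = 0 := by
  simp only [activeKer, Submodule.mem_iInf, LinearMap.mem_ker]

theorem eventually_add_smul_mem_polyhedron [Finite ι] {x d : E} (hx : x ∈ polyhedron f a)
    (hd : d ∈ activeKer f a x) : ∀ᶠ t in 𝓝 (0 : ℝ), x + t • d ∈ polyhedron f a := by
  show ∀ᶠ t in 𝓝 0, ∀ i, f i (x + t • d) ≤ a i
  simp only [map_add, map_smul, smul_eq_mul]
  refine Filter.eventually_all.2 fun i => ?_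
  by_cases hi : i ∈ activeSet f a x
  · simp [mem_activeKer.1 hd i hi, hi.le]
  · have hcont : Continuous fun t : ℝ => f i x + t * f i d := by fun_prop
    have hlim : Filter.Tendsto (fun t : ℝ => f i x + t * f i d) (𝓝 0) (𝓝 (f i x)) := by
      simpa using hcont.tendsto 0
    exact (hlim.eventually_lt_const (lt_of_le_of_ne (hx i) hi)).mono fun _ => le_of_lt

theorem activeKer_eq_bot_of_forall_lt [Finite ι] {x : E} (hx : x ∈ polyhedron f a)
    {g : Module.Dual ℝ E} (hg : ∀ y ∈ polyhedron f a, y ≠ x → g y < g x) :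
    activeKer f a x = ⊥ := by
  refine (Submodule.eq_bot_iff _).2 fun d hd => by_contra fun hd0 => ?_
  wlog hgd : 0 ≤ g d generalizing d
  · exact this (-d) (neg_mem hd) (neg_ne_zero.2 hd0) (by rw [map_neg]; linarith)
  obtain ⟨t, hmem, ht⟩ := ((eventually_add_smul_mem_polyhedron hx hd).filter_mono
    nhdsWithin_le_nhds |>.and self_mem_nhdsWithin).exists (f := 𝓝[>] (0 : ℝ))
  have hne : x + t • d ≠ x := by simpa [ne_of_gt ht] using hd0
  have hlt := hg _ hmem hne
  rw [map_add, map_smul, smul_eq_mul] at hlt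
  nlinarith [mul_nonneg ht.le hgd]

theorem exists_forall_lt_of_activeKer_eq_bot [Fintype ι] {x : E}
    (hK : activeKer f a x = ⊥) :
    ∃ g : Module.Dual ℝ E, ∀ y ∈ polyhedron f a, y ≠ x → g y < g x := by
  classical
  set s := Finset.univ.filter (· ∈ activeSet f a x)
  refine ⟨∑ i ∈ s, f i, fun y hy hyx => ?_⟩
  simp only [LinearMap.coe_sum, Finset.sum_apply]
  have hle : ∀ i ∈ s, f i y ≤ f i x := fun i hi => (Finset.mem_filter.1 hi).2 ▸ hy i
  refine (Finset.sum_le_sum hle).lt_of_ne fun heq => hyx ?_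
  have hsub : y - x ∈ activeKer f a x := mem_activeKer.2 fun i hi => by
    rw [map_sub, (Finset.sum_eq_sum_iff_of_le hle).1 heq i (by simpa [s] using hi), sub_self]
  simpa [hK, sub_eq_zero] using hsub

theorem exists_forall_lt_iff_activeKer_eq_bot [Fintype ι] {x : E} (hx : x ∈ polyhedron f a) :
    (∃ g : Module.Dual ℝ E, ∀ y ∈ polyhedron f a, y ≠ x → g y < g x) ↔
      activeKer f a x = ⊥ :=
  ⟨fun ⟨_, hg⟩ => activeKer_eq_bot_of_forall_lt hx hg, exists_forall_lt_of_activeKer_eq_bot⟩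

theorem activeSet_injOn_basicFeasible : Set.InjOn (activeSet f a) (basicFeasible f a) := by
  intro x ⟨_, hK⟩ y _ hxy
  have hsub : x - y ∈ activeKer f a x := mem_activeKer.2 fun i hi => by
    have hiy : i ∈ activeSet f a y := hxy ▸ hi
    rw [map_sub, hi, hiy, sub_self]
  simpa [hK, sub_eq_zero] using hsub

theorem finite_basicFeasible [Finite ι] : (basicFeasible f a).Finite :=
  (Set.toFinite _).of_finite_image activeSet_injOn_basicFeasible

theorem exists_add_smul_mem_polyhedron_of_pos [Fintype ι] {x e : E}
    (hx : x ∈ polyhedron f a) {j : ι} (hj : 0 < f j e) :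
    ∃ t : ℝ, 0 ≤ t ∧ x + t • e ∈ polyhedron f a ∧
      ∃ i, 0 < f i e ∧ i ∈ activeSet f a (x + t • e) := by
  classical
  obtain ⟨i, hi, hmin⟩ := (Finset.univ.filter fun i => 0 < f i e).exists_min_image
    (fun i => (a i - f i x) / f i e) ⟨j, by simpa using hj⟩
  simp only [Finset.mem_filter, Finset.mem_univ, true_and] at hi hmin
  set t := (a i - f i x) / f i e
  have ht : 0 ≤ t := div_nonneg (sub_nonneg.2 (hx i)) hi.le
  refine ⟨t, ht, fun k => ?_, i, hi, ?_⟩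
  · rw [map_add, map_smul, smul_eq_mul]
    rcases lt_or_ge 0 (f k e) with hk | hk
    · linarith [(le_div_iff₀ hk).1 (hmin k hk)]
    · linarith [hx k, mul_nonpos_of_nonneg_of_nonpos ht hk]
  · show f i (x + t • e) = a i
    rw [map_add, map_smul, smul_eq_mul, div_mul_cancel₀ _ hi.ne']
    ring

variable {u : Module.Dual ℝ E}

theorem exists_mem_nonneg_notMem_recessionCone (hu : ∀ d ∈ recessionCone f, u d ≤ 0)
    (hlin : ∀ d, (∀ i, f i d = 0) → d = 0) {K : Submodule ℝ E} (hK : K ≠ ⊥) :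
    ∃ e ∈ K, 0 ≤ u e ∧ e ∉ recessionCone f := by
  obtain ⟨d, hdK, hd0⟩ := Submodule.exists_mem_ne_zero_of_ne_bot hK
  wlog hud : 0 ≤ u d generalizing d
  · exact this (-d) (neg_mem hdK) (neg_ne_zero.2 hd0) (by rw [map_neg]; linarith)
  by_cases hd : d ∈ recessionCone f
  · have hud0 : u d = 0 := le_antisymm (hu d hd) hud
    refine ⟨-d, neg_mem hdK, by simp [hud0], fun hneg => hd0 (hlin d fun i => ?_)⟩
    exact le_antisymm (hd i) (by simpa using hneg i)
  · exact ⟨d, hdK, hud, hd⟩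

theorem exists_ge_activeSet_ssubset [Fintype ι] (hu : ∀ d ∈ recessionCone f, u d ≤ 0)
    (hlin : ∀ d, (∀ i, f i d = 0) → d = 0) {x : E} (hx : x ∈ polyhedron f a)
    (hK : activeKer f a x ≠ ⊥) :
    ∃ y ∈ polyhedron f a, u x ≤ u y ∧ activeSet f a x ⊂ activeSet f a y := by
  obtain ⟨e, he, hue, hrec⟩ := exists_mem_nonneg_notMem_recessionCone hu hlin hK
  obtain ⟨j, hj⟩ : ∃ j, 0 < f j e := by simpa [recessionCone] using hrec
  obtain ⟨t, ht, hy, i, hi, hiy⟩ := exists_add_smul_mem_polyhedron_of_pos hx hj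
  have hsub : activeSet f a x ⊆ activeSet f a (x + t • e) := fun k hk => by
    show f k (x + t • e) = a k
    rw [map_add, map_smul, mem_activeKer.1 he k hk, smul_zero, add_zero]
    exact hk
  refine ⟨x + t • e, hy, ?_, (Set.ssubset_iff_of_subset hsub).2 ⟨i, hiy, fun hix => ?_⟩⟩
  · rw [map_add, map_smul, smul_eq_mul]
    nlinarith [mul_nonneg ht hue]
  · exact hi.ne' (mem_activeKer.1 he i hix)

theorem exists_mem_basicFeasible_le [Fintype ι] (hu : ∀ d ∈ recessionCone f, u d ≤ 0)
    (hlin : ∀ d, (∀ i, f i d = 0) → d = 0) {x : E} (hx : x ∈ polyhedron f a) :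
    ∃ z ∈ basicFeasible f a, u x ≤ u z := by
  induction x using (InvImage.wf (activeSet f a) wellFounded_gt).induction with
  | _ x ih =>
    by_cases hK : activeKer f a x = ⊥
    · exact ⟨x, ⟨hx, hK⟩, le_rfl⟩
    obtain ⟨y, hy, hxy, hlt⟩ := exists_ge_activeSet_ssubset hu hlin hx hK
    obtain ⟨z, hz, hyz⟩ := ih y hlt hy
    exact ⟨z, hz, hxy.trans hyz⟩

theorem exists_mem_basicFeasible_isMaxOn [Fintype ι] (hu : ∀ d ∈ recessionCone f, u d ≤ 0)
    (hlin : ∀ d, (∀ i, f i d = 0) → d = 0) (hne : (polyhedron f a).Nonempty) :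
    ∃ z ∈ basicFeasible f a, IsMaxOn u (polyhedron f a) z := by
  obtain ⟨x₀, hx₀⟩ := hne
  obtain ⟨z₀, hz₀, -⟩ := exists_mem_basicFeasible_le hu hlin hx₀
  obtain ⟨z, hz, hmax⟩ := Set.exists_max_image _ u finite_basicFeasible ⟨z₀, hz₀⟩
  refine ⟨z, hz, fun y hy => ?_⟩
  obtain ⟨w, hw, hyw⟩ := exists_mem_basicFeasible_le hu hlin hy
  exact hyw.trans (hmax w hw)

end Polyhedron

theorem IsPointed.eq_zero {n : ℕ} {σ : Set (Fin n → ℝ)} (hpt : IsPointed σ)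
    {d : Fin n → ℝ} (hd : ∀ t : ℝ, t • d ∈ σ) : d = 0 := by
  refine Submodule.span_singleton_eq_bot.1 (hpt _ fun w hw => ?_)
  obtain ⟨t, rfl⟩ := Submodule.mem_span_singleton.1 hw
  exact hd t

-- `dotp c` is definitionally the functional `dotProductEquiv ℝ (Fin n) c`.
theorem vertices_eq_basicFeasible {n r : ℕ} (uu : Fin r → Fin n → ℝ) (a : Fin r → ℝ) :
    vertices {v | ∀ i, dotp (uu i) v ≤ a i} =
      basicFeasible (fun i => dotProductEquiv ℝ (Fin n) (uu i)) a := by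
  ext x
  refine and_congr_right fun hx => ?_
  rw [← exists_forall_lt_iff_activeKer_eq_bot hx, (dotProductEquiv ℝ (Fin n)).surjective.exists]
  rfl

/-- Let `P ⊆ ℝⁿ` be a nonempty pointed polyhedron and let
`u ∈ Recc(P)∨`.  Then `Vert(P)` is finite and nonempty, the linear functional
`v ↦ ⟨u,v⟩` is bounded above on `P`, and its supremum over `P` equals its maximum over
`Vert(P)` (in particular the supremum is attained at a vertex). -/
theorem stmt8 {n r : ℕ} (uu : Fin r → (Fin n → ℝ)) (a : Fin r → ℝ)
    (P σ : Set (Fin n → ℝ))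
    (hP : P = {v | ∀ i, dotp (uu i) v ≤ a i})
    (hσ : σ = {v | ∀ i, dotp (uu i) v ≤ 0})
    (hpt : IsPointed σ) (hPne : P.Nonempty)
    (u : Fin n → ℝ) (hu : u ∈ polarCone σ) :
    (vertices P).Finite ∧ (vertices P).Nonempty ∧
      BddAbove ((fun v => dotp u v) '' P) ∧
      ∃ x ∈ vertices P, (∀ v ∈ P, dotp u v ≤ dotp u x) ∧
        sSup ((fun v => dotp u v) '' P) = dotp u x := by
  subst hP hσ
  have hlin : ∀ d, (∀ i, dotp (uu i) d = 0) → d = 0 := fun d hd =>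
    hpt.eq_zero fun t i => by
      show dotProductEquiv ℝ (Fin n) (uu i) (t • d) ≤ 0
      rw [map_smul, smul_eq_mul]
      exact (mul_eq_zero_of_right t (hd i)).le
  obtain ⟨z, hz, hmax⟩ := exists_mem_basicFeasible_isMaxOn
    (f := fun i => dotProductEquiv ℝ (Fin n) (uu i)) (u := dotProductEquiv ℝ (Fin n) u)
    hu hlin hPne
  have hgreat : IsGreatest ((fun v => dotp u v) '' {v | ∀ i, dotp (uu i) v ≤ a i}) (dotp u z) :=
    ⟨⟨z, hz.1, rfl⟩, Set.forall_mem_image.2 hmax⟩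
  rw [vertices_eq_basicFeasible]
  exact ⟨finite_basicFeasible, ⟨z, hz⟩, hgreat.bddAbove, z, hz, hmax, hgreat.csSup_eq⟩

end
end
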